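/- Let (λ_n)_{n≥1} be a sequence of complex numbers with ∑_{n=1}^∞ |λ_n|³ < ∞ and let z ∈ ℂ. Then the infinite products ∏_{n=1}^∞ (1 − zλ_n)·exp(zλ_n + z²λ_n²/2), ∏_{n=1}^∞ (1 + zλ_n)·exp(−zλ_n + z²λ_n²/2) and ∏_{n=1}^∞ (1 − z²λ_n²)·exp(z²λ_n²) are all multipliable, and ∏_{n=1}^∞ (1 − z²λ_n²)·exp(z²λ_n²) = (∏_{n=1}^∞ (1 − zλ_n)·exp(zλ_n + z²λ_n²/2)) · (∏_{n=1}^∞ (1 + zλ_n)·exp(−zλ_n + z²λ_n²/2)). -/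

import Mathlib

/-!
Write `E₃(w) = (1 - w) exp (w + w² / 2)`. Since `log E₃(w) = -(w³/3 + w⁴/4 + ⋯)`, we have
`E₃(w) = 1 + O(|w|³)` near `0`, so `∑ |λₙ|³ < ∞` makes both `∏ E₃(zλₙ)` and `∏ E₃(-zλₙ)`
multipliable. The pointwise identity `E₃(w) E₃(-w) = (1 - w²) exp (w²)` then gives the third
product and its value.
-/

open Complex Filter

lemma norm_one_sub_mul_exp_sub_one_le {w : ℂ} (hw : ‖w‖ ≤ 1 / 2) :
    ‖(1 - w) * exp (w + w ^ 2 / 2) - 1‖ ≤ 2 * ‖w‖ ^ 3 := by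
  have hw1 : ‖w‖ < 1 := hw.trans_lt (by norm_num)
  have hne : 1 - w ≠ 0 := sub_ne_zero.mpr fun h => by simp [← h] at hw1
  have hfactor : (1 - w) * exp (w + w ^ 2 / 2) = exp (log (1 - w) + (w + w ^ 2 / 2)) := by
    rw [exp_add (log _), exp_log hne]
  have hL_le : ‖log (1 - w) + (w + w ^ 2 / 2)‖ ≤ 2 / 3 * ‖w‖ ^ 3 := by
    have htaylor := norm_log_sub_logTaylor_le 2 (z := -w) (by rwa [norm_neg])
    have hL_eq : log (1 + -w) - logTaylor (2 + 1) (-w) = log (1 - w) + (w + w ^ 2 / 2) := by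
      simp [logTaylor, Finset.sum_range_succ, ← sub_eq_add_neg]
      ring
    have hinv : (1 - ‖w‖)⁻¹ ≤ 2 := by
      rw [inv_le_comm₀ (by linarith) (by norm_num)]
      linarith
    rw [hL_eq, norm_neg] at htaylor
    calc _ ≤ ‖w‖ ^ (2 + 1) * (1 - ‖w‖)⁻¹ / (2 + 1) := htaylor
      _ ≤ ‖w‖ ^ 3 * 2 / 3 := by gcongr; norm_num
      _ = 2 / 3 * ‖w‖ ^ 3 := by ring
  have hw3 : ‖w‖ ^ 3 ≤ (1 / 2) ^ 3 := by gcongr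
  rw [hfactor]
  calc _ ≤ 2 * ‖log (1 - w) + (w + w ^ 2 / 2)‖ := norm_exp_sub_one_le (by nlinarith)
    _ ≤ 2 * ‖w‖ ^ 3 := by nlinarith [pow_nonneg (norm_nonneg w) 3]

lemma multipliable_one_sub_mul_exp {ι : Type*} {a : ι → ℂ}
    (ha : Summable fun i => ‖a i‖ ^ 3) :
    Multipliable fun i => (1 - a i) * exp (a i + a i ^ 2 / 2) := by
  have hsmall : ∀ᶠ i in cofinite, ‖a i‖ ≤ 1 / 2 := by
    have hpos : (0 : ℝ) < (1 / 2) ^ 3 := by norm_num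
    filter_upwards [ha.tendsto_cofinite_zero.eventually_le_const hpos] with i hi
    exact (pow_le_pow_iff_left₀ (norm_nonneg _) (by norm_num) (by norm_num)).mp hi
  have hsub : Summable fun i => (1 - a i) * exp (a i + a i ^ 2 / 2) - 1 :=
    (ha.mul_left 2).of_norm_bounded_eventually
      (hsmall.mono fun _ => norm_one_sub_mul_exp_sub_one_le)
  simpa using Complex.multipliable_one_add_of_summable hsub

lemma one_sub_sq_mul_exp_sq (w : ℂ) :
    (1 - w ^ 2) * exp (w ^ 2) =
      (1 - w) * exp (w + w ^ 2 / 2) * ((1 + w) * exp (-w + w ^ 2 / 2)) := by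
  have hexp : exp (w ^ 2) = exp (w + w ^ 2 / 2) * exp (-w + w ^ 2 / 2) := by
    rw [← exp_add]
    ring_nf
  rw [hexp]
  ring

/-- For a sequence `(λ n)` with `∑ ‖λ n‖³ < ∞` (eigenvalues of an operator in 𝒥₃)
and `z ∈ ℂ`, the products defining `det₃(I - zK)`, `det₃(I + zK)` and
`det₂(I - z²K²)` are multipliable and
`det₂(I - z²K²) = det₃(I - zK) · det₃(I + zK)`. -/
theorem stmt_2 (lam : ℕ → ℂ) (hlam : Summable fun n => ‖lam n‖ ^ 3) (z : ℂ) :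
    Multipliable (fun n =>
      (1 - z * lam n) * Complex.exp (z * lam n + z ^ 2 * lam n ^ 2 / 2)) ∧
    Multipliable (fun n =>
      (1 + z * lam n) * Complex.exp (-(z * lam n) + z ^ 2 * lam n ^ 2 / 2)) ∧
    Multipliable (fun n =>
      (1 - z ^ 2 * lam n ^ 2) * Complex.exp (z ^ 2 * lam n ^ 2)) ∧
    (∏' n, (1 - z ^ 2 * lam n ^ 2) * Complex.exp (z ^ 2 * lam n ^ 2)) =
      (∏' n, (1 - z * lam n) * Complex.exp (z * lam n + z ^ 2 * lam n ^ 2 / 2)) *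
        (∏' n, (1 + z * lam n) * Complex.exp (-(z * lam n) + z ^ 2 * lam n ^ 2 / 2)) := by
  have hcube : Summable fun n => ‖z * lam n‖ ^ 3 := by
    simpa [norm_mul, mul_pow] using hlam.mul_left (‖z‖ ^ 3)
  have hminus : Multipliable fun n =>
      (1 - z * lam n) * exp (z * lam n + z ^ 2 * lam n ^ 2 / 2) := by
    simpa [mul_pow] using multipliable_one_sub_mul_exp hcube
  have hplus : Multipliable fun n =>
      (1 + z * lam n) * exp (-(z * lam n) + z ^ 2 * lam n ^ 2 / 2) := by
    simpa [mul_pow] using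
      multipliable_one_sub_mul_exp (a := fun n => -(z * lam n)) (by simpa using hcube)
  have hfactor : ∀ n, (1 - z ^ 2 * lam n ^ 2) * exp (z ^ 2 * lam n ^ 2) =
      (1 - z * lam n) * exp (z * lam n + z ^ 2 * lam n ^ 2 / 2) *
        ((1 + z * lam n) * exp (-(z * lam n) + z ^ 2 * lam n ^ 2 / 2)) := fun n => by
    simpa [mul_pow] using one_sub_sq_mul_exp_sq (z * lam n)
  refine ⟨hminus, hplus, (hminus.mul hplus).congr fun n => (hfactor n).symm, ?_⟩
  rw [tprod_congr hfactor, hminus.tprod_mul hplus]
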